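/- Let q₀ ∈ ℍ ∖ ℝ and p ≥ 1. Then for all 0 ≤ k ≤ p, the value of ∂_s(∂_c∂_s)^k applied to the polynomial x ↦ Δ_{q₀}^p(x)(x − q₀), evaluated at x = q₀, equals k! if k = p and 0 otherwise. -/

import Mathlib

/-!
Off the real axis, `Δ_{q₀}(x)^p = U + Im(x) V` with `U`, `V` polynomials in `(Re x, |Im x|²)`,
hence `∂_s(Δ_{q₀}^p(x)(x - q₀)) = H(Re x, |Im x|²)` for a smooth `H` with
`H(Re q₀, s) = (|Im q₀|² - s)^p`. On functions of `(Re x, |Im x|²)` the operator `∂_s∂_c` acts as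
`-∂/∂s`, and `∂_s (∂_c∂_s)^k = (∂_s∂_c)^k ∂_s`. So the value sought is the `k`-th derivative of
`s ↦ (|Im q₀|² - s)^p` with respect to `-s` at `s = |Im q₀|²`, i.e. `p(p-1)⋯(p-k+1) · 0^(p-k)`
(with truncated `p - k`).
-/

noncomputable section

open Quaternion

abbrev ℍq := Quaternion ℝ

/-- Spherical value of a function of a quaternionic variable. -/
def svalue (f : ℍq → ℍq) (x : ℍq) : ℍq := (f x + f (star x)) / 2

/-- Spherical derivative of a function of a quaternionic variable. -/
def sderiv' (f : ℍq → ℍq) (x : ℍq) : ℍq := (2 * x.im)⁻¹ * (f x - f (star x))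

/-- The imaginary unit `Im(x)/|Im(x)|` attached to a (non-real) quaternion. -/
def qJ (x : ℍq) : ℍq := (‖x.im‖)⁻¹ • x.im

/-- Slice (Cullen) derivative `∂_c f = (1/2)(∂/∂α − I ∂/∂β) f` at `x = α + Iβ`. -/
def cderiv (f : ℍq → ℍq) (x : ℍq) : ℍq :=
  (1/2 : ℝ) • (fderiv ℝ f x 1 - qJ x * fderiv ℝ f x (qJ x))

/-- The conjugate operator `∂̄_c f = (1/2)(∂/∂α + I ∂/∂β) f`. -/
def cderivBar (f : ℍq → ℍq) (x : ℍq) : ℍq :=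
  (1/2 : ℝ) • (fderiv ℝ f x 1 + qJ x * fderiv ℝ f x (qJ x))

/-- A circular (axially symmetric) subset of the quaternions. -/
def IsCircular (Ω : Set ℍq) : Prop :=
  ∀ x ∈ Ω, ∀ y : ℍq, y.re = x.re → ‖y.im‖ = ‖x.im‖ → y ∈ Ω

/-- A slice function on `Ω`: it is determined by the representation formula
`f(α + Iβ) = F₀(α,β) + I F₁(α,β)` with `F₀ = v_s f`, `F₁ = β ∂_s f`. -/
def IsSlice (Ω : Set ℍq) (f : ℍq → ℍq) : Prop :=
  ∀ x ∈ Ω, ∀ y ∈ Ω, x.re = y.re → ‖x.im‖ = ‖y.im‖ →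
    f x = svalue f y + x.im * sderiv' f y

/-- A slice regular function on a circular domain: a real-differentiable slice
function whose stem function is holomorphic, i.e. `∂̄_c f = 0` off the reals. -/
def IsSliceRegular (Ω : Set ℍq) (f : ℍq → ℍq) : Prop :=
  IsSlice Ω f ∧ DifferentiableOn ℝ f Ω ∧ ∀ x ∈ Ω, x.im ≠ 0 → cderivBar f x = 0

/-- Pointwise formula for the slice product `f·g = 𝓘(FG)` of two slice functions. -/
def sprod (f g : ℍq → ℍq) (x : ℍq) : ℍq :=
  svalue f x * svalue g x + x.im * x.im * (sderiv' f x * sderiv' g x)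
    + x.im * (svalue f x * sderiv' g x + sderiv' f x * svalue g x)

/-- Characteristic polynomial of `q₀`: `Δ_{q₀}(x) = x² − 2 Re(q₀) x + |q₀|²`. -/
def Delta (q₀ : ℍq) (x : ℍq) : ℍq := x ^ 2 - 2 * (q₀.re : ℍq) * x + ((‖q₀‖ ^ 2 : ℝ) : ℍq)

/-- The operator `∂_c ∂_s`. -/
def opCS (f : ℍq → ℍq) : ℍq → ℍq := cderiv (sderiv' f)

/-- The operator `∂_s ∂_c`. -/
def opSC (f : ℍq → ℍq) : ℍq → ℍq := sderiv' (cderiv f)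

open scoped ContDiff RealInnerProductSpace

instance Quaternion.instCharZero {R : Type*} [CommRing R] [CharZero R] : CharZero ℍ[R] :=
  ⟨fun m n h => by simpa using congrArg (·.re) h⟩

def axialCoords (x : ℍq) : ℝ × ℝ := (x.re, ‖x.im‖ ^ 2)

lemma axialCoords_star (x : ℍq) : axialCoords (star x) = axialCoords x := by
  simp [axialCoords]

def ofStem (x : ℍq) (u : ℝ × ℝ) : ℍq := u.1 + x.im * u.2

-- `(u₁ + I u₂)(v₁ + I v₂)` for an imaginary `I` with `I² = -s`.
def stemMul (s : ℝ) (u v : ℝ × ℝ) : ℝ × ℝ := (u.1 * v.1 - s * u.2 * v.2, u.1 * v.2 + u.2 * v.1)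

def stemPow (s : ℝ) (u : ℝ × ℝ) : ℕ → ℝ × ℝ
  | 0 => (1, 0)
  | n + 1 => stemMul s (stemPow s u n) u

lemma norm_im_sq (x : ℍq) : ‖x.im‖ ^ 2 = x.imI ^ 2 + x.imJ ^ 2 + x.imK ^ 2 := by
  rw [sq, ← Quaternion.normSq_eq_norm_mul_self, Quaternion.normSq_def']
  simp

lemma ofStem_mul (x : ℍq) (u v : ℝ × ℝ) :
    ofStem x u * ofStem x v = ofStem x (stemMul (‖x.im‖ ^ 2) u v) := by
  rw [norm_im_sq]
  ext <;> simp [ofStem, stemMul, sq] <;> ring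

lemma ofStem_pow (x : ℍq) (u : ℝ × ℝ) (n : ℕ) :
    ofStem x u ^ n = ofStem x (stemPow (‖x.im‖ ^ 2) u n) := by
  induction n with
  | zero => simp [ofStem, stemPow]
  | succ n ih => rw [pow_succ, ih, ofStem_mul, stemPow]

lemma stemPow_real (s r : ℝ) (n : ℕ) : stemPow s (r, 0) n = (r ^ n, 0) := by
  induction n with
  | zero => rfl
  | succ n ih => simp [stemPow, stemMul, ih, pow_succ]

lemma ContDiff.stemPow {F : ℝ × ℝ → ℝ × ℝ} (hF : ContDiff ℝ ∞ F) (n : ℕ) :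
    ContDiff ℝ ∞ (fun z => stemPow z.2 (F z) n) := by
  induction n with
  | zero => exact contDiff_const
  | succ n ih =>
    simp only [_root_.stemPow, stemMul]
    fun_prop

lemma ofStem_star (x : ℍq) (u : ℝ × ℝ) : ofStem (star x) u = u.1 - x.im * u.2 := by
  simp [ofStem, sub_eq_add_neg]

lemma sderiv_ofStem_mul_sub (F : ℝ × ℝ → ℝ × ℝ) (q : ℍq) {x : ℍq} (hx : x.im ≠ 0) :
    sderiv' (fun y => ofStem y (F (axialCoords y)) * (y - q)) x
      = ((F (axialCoords x)).1 : ℍq) + (F (axialCoords x)).2 • ((x.re : ℍq) - q) := by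
  set u := F (axialCoords x)
  have hdiff : ofStem x u * (x - q) - ofStem (star x) u * (star x - q)
      = 2 * x.im * ((u.1 : ℍq) + u.2 • ((x.re : ℍq) - q)) := by
    rw [ofStem_star, ofStem]
    ext <;> simp [two_mul, add_mul] <;> ring
  simp only [sderiv', axialCoords_star]
  rw [hdiff, inv_mul_cancel_left₀ (mul_ne_zero two_ne_zero hx)]

def deltaStem (q₀ : ℍq) (z : ℝ × ℝ) : ℝ × ℝ :=
  (z.1 ^ 2 - z.2 - 2 * q₀.re * z.1 + ‖q₀‖ ^ 2, 2 * (z.1 - q₀.re))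

lemma Delta_eq_ofStem (q₀ x : ℍq) : Delta q₀ x = ofStem x (deltaStem q₀ (axialCoords x)) := by
  rw [Delta, ofStem, deltaStem, axialCoords, norm_im_sq]
  ext <;> simp [sq, two_mul, add_mul] <;> ring

lemma norm_sq_eq_re_sq_add_norm_im_sq (q : ℍq) : ‖q‖ ^ 2 = q.re ^ 2 + ‖q.im‖ ^ 2 := by
  rw [norm_im_sq, sq, ← Quaternion.normSq_eq_norm_mul_self, Quaternion.normSq_def']
  ring

lemma deltaStem_re (q₀ : ℍq) (s : ℝ) : deltaStem q₀ (q₀.re, s) = (‖q₀.im‖ ^ 2 - s, 0) := by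
  rw [deltaStem, norm_sq_eq_re_sq_add_norm_im_sq, Prod.mk.injEq]
  constructor <;> ring

@[fun_prop]
lemma contDiff_quaternion_coe {n : WithTop ℕ∞} : ContDiff ℝ n (fun r : ℝ => (r : ℍq)) := by
  rw [← Quaternion.algebraMap_def]
  exact (Algebra.linearMap ℝ ℍq).toContinuousLinearMap.contDiff

def sderivMulSubStem (q : ℍq) (F : ℝ × ℝ → ℝ × ℝ) (z : ℝ × ℝ) : ℍq :=
  ((F z).1 : ℍq) + (F z).2 • ((z.1 : ℍq) - q)

lemma ContDiff.sderivMulSubStem {F : ℝ × ℝ → ℝ × ℝ} (hF : ContDiff ℝ ∞ F) (q : ℍq) :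
    ContDiff ℝ ∞ (sderivMulSubStem q F) := by
  unfold _root_.sderivMulSubStem
  fun_prop

def deltaPowStem (q₀ : ℍq) (p : ℕ) (z : ℝ × ℝ) : ℝ × ℝ := stemPow z.2 (deltaStem q₀ z) p

lemma contDiff_deltaPowStem (q₀ : ℍq) (p : ℕ) : ContDiff ℝ ∞ (deltaPowStem q₀ p) :=
  ContDiff.stemPow (by unfold deltaStem; fun_prop) p

lemma sderiv_Delta_pow_mul_sub (q₀ : ℍq) (p : ℕ) {x : ℍq} (hx : x.im ≠ 0) :
    sderiv' (fun y => Delta q₀ y ^ p * (y - q₀)) x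
      = sderivMulSubStem q₀ (deltaPowStem q₀ p) (axialCoords x) := by
  simp_rw [Delta_eq_ofStem, ofStem_pow]
  exact sderiv_ofStem_mul_sub (deltaPowStem q₀ p) q₀ hx

lemma sderivMulSubStem_deltaPowStem_re (q₀ : ℍq) (p : ℕ) (s : ℝ) :
    sderivMulSubStem q₀ (deltaPowStem q₀ p) (q₀.re, s) = (((‖q₀.im‖ ^ 2 - s) ^ p : ℝ) : ℍq) := by
  simp [sderivMulSubStem, deltaPowStem, deltaStem_re, stemPow_real]

def reCLM : ℍq →L[ℝ] ℝ :=
  LinearMap.toContinuousLinearMap (QuaternionAlgebra.reₗ (-1 : ℝ) 0 (-1))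

def imCLM : ℍq →L[ℝ] ℍq :=
  LinearMap.toContinuousLinearMap
    { toFun := Quaternion.im
      map_add' := Quaternion.im_add
      map_smul' := fun r x => Quaternion.im_smul x r }

@[simp] lemma reCLM_apply (x : ℍq) : reCLM x = x.re := rfl

@[simp] lemma imCLM_apply (x : ℍq) : imCLM x = x.im := rfl

def axialCoordsDeriv (x : ℍq) : ℍq →L[ℝ] ℝ × ℝ := reCLM.prod (2 • (innerSL ℝ x.im).comp imCLM)

lemma hasFDerivAt_axialCoords (x : ℍq) : HasFDerivAt axialCoords (axialCoordsDeriv x) x :=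
  reCLM.hasFDerivAt.prodMk imCLM.hasFDerivAt.norm_sq

lemma axialCoordsDeriv_one (x : ℍq) : axialCoordsDeriv x 1 = (1, 0) := by
  simp [axialCoordsDeriv]

lemma axialCoordsDeriv_qJ (x : ℍq) : axialCoordsDeriv x (qJ x) = (0, 2 * ‖x.im‖) := by
  simp [axialCoordsDeriv, qJ]
  rw [mul_left_comm, sq, ← mul_assoc ‖x.im‖⁻¹, inv_mul_mul_self]

lemma cderiv_comp_axialCoords {H : ℝ × ℝ → ℍq} {x : ℍq} (hH : DifferentiableAt ℝ H (axialCoords x))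
    (hx : x.im ≠ 0) :
    cderiv (fun y => H (axialCoords y)) x
      = (1 / 2 : ℝ) • fderiv ℝ H (axialCoords x) (1, 0)
        - x.im * fderiv ℝ H (axialCoords x) (0, 1) := by
  have hchain := (hH.hasFDerivAt.comp x (hasFDerivAt_axialCoords x)).fderiv
  simp only [Function.comp_def] at hchain
  set D := fderiv ℝ H (axialCoords x)
  have hqJ : qJ x * D (0, 2 * ‖x.im‖) = (2 : ℝ) • (x.im * D (0, 1)) := by
    have hnorm : ‖x.im‖ ≠ 0 := norm_ne_zero_iff.mpr hx
    rw [qJ, show ((0 : ℝ), 2 * ‖x.im‖) = (2 * ‖x.im‖) • ((0 : ℝ), (1 : ℝ)) by simp, map_smul,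
      smul_mul_smul_comm, show ‖x.im‖⁻¹ * (2 * ‖x.im‖) = 2 by field_simp]
  rw [cderiv, hchain, ContinuousLinearMap.comp_apply, ContinuousLinearMap.comp_apply,
    axialCoordsDeriv_one, axialCoordsDeriv_qJ, hqJ, smul_sub, smul_smul]
  norm_num

lemma Filter.EventuallyEq.cderiv_eq {f g : ℍq → ℍq} {x : ℍq} (h : f =ᶠ[nhds x] g) :
    cderiv f x = cderiv g x := by
  rw [cderiv, cderiv, h.fderiv_eq]

def negDerivSnd (H : ℝ × ℝ → ℍq) (z : ℝ × ℝ) : ℍq := -fderiv ℝ H z (0, 1)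

lemma ContDiff.negDerivSnd {H : ℝ × ℝ → ℍq} (hH : ContDiff ℝ ∞ H) :
    ContDiff ℝ ∞ (negDerivSnd H) :=
  ((hH.fderiv_right le_rfl).clm_apply contDiff_const).neg

lemma isOpen_im_ne_zero : IsOpen {x : ℍq | x.im ≠ 0} :=
  isOpen_compl_singleton.preimage Quaternion.continuous_im

lemma opSC_eq_negDerivSnd {g : ℍq → ℍq} {H : ℝ × ℝ → ℍq} (hH : Differentiable ℝ H)
    (hg : ∀ x : ℍq, x.im ≠ 0 → g x = H (axialCoords x)) {x : ℍq} (hx : x.im ≠ 0) :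
    opSC g x = negDerivSnd H (axialCoords x) := by
  have hcderiv : ∀ y : ℍq, y.im ≠ 0 → cderiv g y
      = (1 / 2 : ℝ) • fderiv ℝ H (axialCoords y) (1, 0)
        - y.im * fderiv ℝ H (axialCoords y) (0, 1) := by
    intro y hy
    rw [← cderiv_comp_axialCoords (hH _) hy]
    exact Filter.EventuallyEq.cderiv_eq
      (Filter.eventuallyEq_of_mem (isOpen_im_ne_zero.mem_nhds hy) hg)
  have hx' : (star x).im ≠ 0 := by simpa using hx
  rw [opSC, sderiv', hcderiv x hx, hcderiv _ hx', axialCoords_star, Quaternion.im_star, negDerivSnd]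
  have hdiff : ∀ a b : ℍq, a - x.im * b - (a - -x.im * b) = 2 * x.im * -b := by
    intro a b
    noncomm_ring
  rw [hdiff, inv_mul_cancel_left₀ (mul_ne_zero two_ne_zero hx)]

lemma sderiv_opCS_iterate (f : ℍq → ℍq) (k : ℕ) :
    sderiv' (opCS^[k] f) = opSC^[k] (sderiv' f) :=
  (Function.Semiconj.iterate_right (f := sderiv') (ga := opCS) (gb := opSC) (fun _ => rfl) k) f

lemma opSC_iterate_eq_negDerivSnd_iterate {g : ℍq → ℍq} {H : ℝ × ℝ → ℍq}
    (hH : ContDiff ℝ ∞ H) (hg : ∀ x : ℍq, x.im ≠ 0 → g x = H (axialCoords x)) (k : ℕ) :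
    ∀ x : ℍq, x.im ≠ 0 → opSC^[k] g x = negDerivSnd^[k] H (axialCoords x) := by
  induction k generalizing g H with
  | zero => exact hg
  | succ k ih =>
    simp only [Function.iterate_succ_apply]
    exact ih hH.negDerivSnd fun x hx =>
      opSC_eq_negDerivSnd (hH.differentiable (by simp)) hg hx

lemma negDerivSnd_apply_mk {H : ℝ × ℝ → ℍq} {a s : ℝ} (hH : DifferentiableAt ℝ H (a, s)) :
    negDerivSnd H (a, s) = -deriv (fun t => H (a, t)) s := by
  have hline : HasDerivAt (fun t : ℝ => (a, t)) (0, 1) s :=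
    (hasDerivAt_const s a).prodMk (hasDerivAt_id s)
  exact congrArg Neg.neg (hH.hasFDerivAt.comp_hasDerivAt s hline).deriv.symm

lemma negDerivSnd_iterate_apply_mk {H : ℝ × ℝ → ℍq} (hH : ContDiff ℝ ∞ H) (k : ℕ) (a s : ℝ) :
    negDerivSnd^[k] H (a, s) = (fun c : ℝ → ℍq => -deriv c)^[k] (fun t => H (a, t)) s := by
  induction k generalizing H with
  | zero => rfl
  | succ k ih =>
    have hslice : (fun t => negDerivSnd H (a, t)) = -deriv (fun t => H (a, t)) := by
      funext t
      exact negDerivSnd_apply_mk (hH.differentiable (by simp) _)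
    rw [Function.iterate_succ_apply, Function.iterate_succ_apply, ih hH.negDerivSnd, hslice]

lemma HasDerivAt.quaternion_coe {g : ℝ → ℝ} {g' t : ℝ} (h : HasDerivAt g g' t) :
    HasDerivAt (fun s => (g s : ℍq)) (g' : ℍq) t := by
  simpa [Algebra.smul_def, Quaternion.algebraMap_def] using h.smul_const (1 : ℍq)

lemma negDeriv_iterate_pow (b : ℝ) (p k : ℕ) :
    (fun c : ℝ → ℍq => -deriv c)^[k] (fun t => (((b - t) ^ p : ℝ) : ℍq))
      = fun t => ((p.descFactorial k * (b - t) ^ (p - k) : ℝ) : ℍq) := by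
  induction k with
  | zero => simp
  | succ k ih =>
    rw [Function.iterate_succ_apply', ih]
    funext t
    have hderiv : HasDerivAt (fun t => ((p.descFactorial k * (b - t) ^ (p - k) : ℝ) : ℍq))
        ((p.descFactorial k * ((p - k : ℕ) * (b - t) ^ (p - k - 1) * -1) : ℝ) : ℍq) t :=
      ((((hasDerivAt_id t).const_sub b).pow (p - k)).const_mul _).quaternion_coe
    rw [Pi.neg_apply, hderiv.deriv, ← Quaternion.coe_neg, Nat.descFactorial_succ, Nat.sub_sub]
    congr 1
    push_cast
    ring

theorem sderiv_opCS_iterate_Delta_pow_mul_general (q₀ : ℍq) (hq₀ : q₀.im ≠ 0)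
    (p k : ℕ) :
    sderiv' (opCS^[k] (fun x => Delta q₀ x ^ p * (x - q₀))) q₀
      = if k = p then (k.factorial : ℍq) else 0 := by
  have hH := (contDiff_deltaPowStem q₀ p).sderivMulSubStem q₀
  rw [sderiv_opCS_iterate, opSC_iterate_eq_negDerivSnd_iterate hH
    (fun x hx => sderiv_Delta_pow_mul_sub q₀ p hx) k q₀ hq₀, axialCoords,
    negDerivSnd_iterate_apply_mk hH]
  simp only [sderivMulSubStem_deltaPowStem_re, negDeriv_iterate_pow, sub_self]
  rcases lt_trichotomy k p with hlt | rfl | hgt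
  · simp [hlt.ne, Nat.sub_ne_zero_of_lt hlt]
  · simp [Nat.descFactorial_self, Quaternion.coe_natCast]
  · simp [hgt.ne', Nat.descFactorial_eq_zero_iff_lt.mpr hgt]

/-- `∂_s(∂_c∂_s)^k (Δ_{q₀}^p(x)(x−q₀))` at `q₀` is `k!` when
`k = p` and `0` otherwise. -/
theorem sderiv_opCS_iterate_Delta_pow_mul (q₀ : ℍq) (hq₀ : q₀.im ≠ 0)
    (p k : ℕ) (hp : 1 ≤ p) (hk : k ≤ p) :
    sderiv' (opCS^[k] (fun x => Delta q₀ x ^ p * (x - q₀))) q₀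
      = if k = p then (k.factorial : ℍq) else 0 :=
  sderiv_opCS_iterate_Delta_pow_mul_general q₀ hq₀ p k
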